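/- arXiv:2311.01336 — 3 statements merged into one kernel-verified Lean document; each statement's English description precedes it below -/
import Mathlib

section
/- The fourth h-statistic is an unbiased estimator of the fourth central moment: for N ≥ 4 i.i.d. samples, E[h_4] = μ_4, where h_4 := (1/(N(N−1)(N−2)(N−3)))(−3S_1^4 + 6N S_1^2 S_2 + (9−6N)S_2^2 + (−4N^2+8N−12)S_1 S_3 + (N^3−2N^2+3N)S_4). -/
/-!
Translating every sample by the same constant does not change `h₄`, so the samples may be assumed
centred. Each product of power sums occurring in `h₄` is a sum over `k` of terms
`X_k ^ a * (X_k + R_k) ^ b`, where `R_k = ∑_{i ≠ k} X_i` is independent of `X_k`; with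
`E[R_k] = 0` and `E[R_k ^ 2] = (N - 1) σ²` (`σ²` the variance) this gives
`E[S₁⁴] = N μ₄ + 3N(N-1) σ⁴`, `E[S₂ S₁²] = E[S₂²] = N μ₄ + N(N-1) σ⁴` and `E[S₃ S₁] = E[S₄] = N μ₄`.
In the combination defining `h₄` the `σ⁴` terms cancel and `μ₄` gets the coefficient
`N(N-1)(N-2)(N-3)`.
-/

open MeasureTheory ProbabilityTheory Finset

section PowerSum

variable {ι : Type*} [Fintype ι]

def powerSum (x : ι → ℝ) (r : ℕ) : ℝ := ∑ i, x i ^ r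

noncomputable def hStat4 (x : ι → ℝ) : ℝ :=
  let n : ℝ := Fintype.card ι
  let s := powerSum x
  (n * (n - 1) * (n - 2) * (n - 3))⁻¹ *
    (-3 * s 1 ^ 4 + 6 * n * (s 2 * s 1 ^ 2) + (9 - 6 * n) * s 2 ^ 2 +
      (-4 * n ^ 2 + 8 * n - 12) * (s 3 * s 1) + (n ^ 3 - 2 * n ^ 2 + 3 * n) * s 4)

@[simp] lemma powerSum_zero (x : ι → ℝ) : powerSum x 0 = Fintype.card ι := by
  simp [powerSum]

lemma powerSum_add_const (x : ι → ℝ) (c : ℝ) (r : ℕ) :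
    powerSum (fun i ↦ x i + c) r =
      ∑ j ∈ range (r + 1), powerSum x j * c ^ (r - j) * r.choose j := by
  simp only [powerSum, add_pow, sum_mul]
  exact sum_comm

lemma hStat4_add_const (x : ι → ℝ) (c : ℝ) : hStat4 (fun i ↦ x i + c) = hStat4 x := by
  simp only [hStat4, powerSum_add_const, sum_range_succ, sum_range_zero, powerSum_zero]
  congr 1
  norm_num [Nat.choose]
  ring

lemma powerSum_mul_powerSum_one_pow [DecidableEq ι] (x : ι → ℝ) (a b : ℕ) :
    powerSum x a * powerSum x 1 ^ b = ∑ k, x k ^ a * (x k + ∑ i ∈ univ.erase k, x i) ^ b := by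
  simp only [powerSum, pow_one, add_sum_erase _ _ (mem_univ _), sum_mul]

end PowerSum

lemma pow_mul_add_pow_eq_sum {R : Type*} [CommSemiring R] (x y : R) (a b : ℕ) :
    x ^ a * (x + y) ^ b = ∑ j ∈ range (b + 1), x ^ (a + j) * y ^ (b - j) * b.choose j := by
  rw [add_pow, mul_sum]
  refine sum_congr rfl fun j _ ↦ ?_
  ring

namespace MeasureTheory

variable {Ω : Type*} [MeasurableSpace Ω] {μ : Measure Ω} [IsFiniteMeasure μ]

lemma MemLp.integrable_pow {f : Ω → ℝ} {p k : ℕ} (hf : MemLp f p μ) (hk : k ≤ p) :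
    Integrable (fun ω ↦ f ω ^ k) μ := by
  have := (hf.mono_exponent (by exact_mod_cast hk : (k : ENNReal) ≤ p)).integrable_norm_pow'
  exact (integrable_norm_iff (hf.1.pow k)).1 (by simpa [norm_pow] using this)

lemma MemLp.sq_of_four {f : Ω → ℝ} (hf : MemLp f 4 μ) : MemLp (fun ω ↦ f ω ^ 2) 2 μ := by
  refine (memLp_two_iff_integrable_sq (hf.1.pow 2)).2 ?_
  simpa [← pow_mul] using (show MemLp f (4 : ℕ) μ by exact_mod_cast hf).integrable_pow le_rfl

end MeasureTheory

namespace ProbabilityTheory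

variable {Ω : Type*} [MeasurableSpace Ω] {μ : Measure Ω}

lemma IdentDistrib.integral_pow_eq {Ω' : Type*} [MeasurableSpace Ω'] {ν : Measure Ω'}
    {f : Ω → ℝ} {g : Ω' → ℝ} (h : IdentDistrib f g μ ν) (r : ℕ) :
    ∫ ω, f ω ^ r ∂μ = ∫ ω, g ω ^ r ∂ν :=
  (h.comp (measurable_id.pow_const r)).integral_eq

lemma IndepFun.integral_pow_mul_pow {A B : Ω → ℝ} (hAB : IndepFun A B μ)
    (hA : AEStronglyMeasurable A μ) (hB : AEStronglyMeasurable B μ) (a b : ℕ) :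
    ∫ ω, A ω ^ a * B ω ^ b ∂μ = (∫ ω, A ω ^ a ∂μ) * ∫ ω, B ω ^ b ∂μ :=
  (hAB.comp (measurable_id.pow_const a)
    (measurable_id.pow_const b)).integral_fun_mul_eq_mul_integral (hA.pow a) (hB.pow b)

variable {ι : Type*} [Fintype ι] [DecidableEq ι]

lemma iIndepFun.indepFun_sum_erase {f : ι → Ω → ℝ} (hf : iIndepFun f μ)
    (hmeas : ∀ i, AEMeasurable (f i) μ) (k : ι) :
    IndepFun (f k) (fun ω ↦ ∑ i ∈ univ.erase k, f i ω) μ := by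
  have := (hf.indepFun_finsetSum_of_notMem₀ hmeas (notMem_erase k univ)).symm
  convert this using 1
  ext ω
  simp

variable [IsFiniteMeasure μ]

lemma IndepFun.integrable_pow_mul_pow {A B : Ω → ℝ} {p a b : ℕ}
    (hAB : IndepFun A B μ) (hA : MemLp A p μ) (hB : MemLp B p μ) (ha : a ≤ p) (hb : b ≤ p) :
    Integrable (fun ω ↦ A ω ^ a * B ω ^ b) μ :=
  (hAB.comp (measurable_id.pow_const a) (measurable_id.pow_const b)).integrable_mul
    (hA.integrable_pow ha) (hB.integrable_pow hb)

lemma IndepFun.integrable_pow_mul_add_pow {A B : Ω → ℝ} {p a b : ℕ}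
    (hAB : IndepFun A B μ) (hA : MemLp A p μ) (hB : MemLp B p μ) (hab : a + b ≤ p) :
    Integrable (fun ω ↦ A ω ^ a * (A ω + B ω) ^ b) μ := by
  simp_rw [pow_mul_add_pow_eq_sum]
  refine integrable_finsetSum _ fun j hj ↦ ?_
  have := mem_range.1 hj
  exact (hAB.integrable_pow_mul_pow hA hB (by omega) (by omega)).mul_const _

lemma IndepFun.integral_pow_mul_add_pow {A B : Ω → ℝ} {p a b : ℕ}
    (hAB : IndepFun A B μ) (hA : MemLp A p μ) (hB : MemLp B p μ) (hab : a + b ≤ p) :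
    ∫ ω, A ω ^ a * (A ω + B ω) ^ b ∂μ =
      ∑ j ∈ range (b + 1), (∫ ω, A ω ^ (a + j) ∂μ) * (∫ ω, B ω ^ (b - j) ∂μ) * b.choose j := by
  simp_rw [pow_mul_add_pow_eq_sum]
  rw [integral_finsetSum _ fun j hj ↦ ?_]
  · refine sum_congr rfl fun j _ ↦ ?_
    rw [integral_mul_const, hAB.integral_pow_mul_pow hA.1 hB.1]
  · have := mem_range.1 hj
    exact (hAB.integrable_pow_mul_pow hA hB (by omega) (by omega)).mul_const _

lemma iIndepFun.integrable_powerSum_mul_powerSum_one_pow {f : ι → Ω → ℝ}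
    {p a b : ℕ} (hf : iIndepFun f μ) (hp : ∀ i, MemLp (f i) p μ) (hab : a + b ≤ p) :
    Integrable (fun ω ↦ powerSum (f · ω) a * powerSum (f · ω) 1 ^ b) μ := by
  simp_rw [powerSum_mul_powerSum_one_pow]
  exact integrable_finsetSum _ fun k _ ↦
    (hf.indepFun_sum_erase (fun i ↦ (hp i).1.aemeasurable) k).integrable_pow_mul_add_pow (hp k)
      (memLp_finsetSum _ fun i _ ↦ hp i) hab

lemma iIndepFun.integral_powerSum_mul_powerSum_one_pow {f : ι → Ω → ℝ}
    {p a b : ℕ} (hf : iIndepFun f μ) (hp : ∀ i, MemLp (f i) p μ) (hab : a + b ≤ p) :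
    ∫ ω, powerSum (f · ω) a * powerSum (f · ω) 1 ^ b ∂μ =
      ∑ k, ∑ j ∈ range (b + 1), (∫ ω, f k ω ^ (a + j) ∂μ) *
        (∫ ω, (∑ i ∈ univ.erase k, f i ω) ^ (b - j) ∂μ) * b.choose j := by
  simp_rw [powerSum_mul_powerSum_one_pow]
  have hindep k := hf.indepFun_sum_erase (fun i ↦ (hp i).1.aemeasurable) k
  have hsum k : MemLp (fun ω ↦ ∑ i ∈ univ.erase k, f i ω) p μ :=
    memLp_finsetSum _ fun i _ ↦ hp i
  rw [integral_finsetSum _ fun k _ ↦ (hindep k).integrable_pow_mul_add_pow (hp k) (hsum k) hab]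
  exact sum_congr rfl fun k _ ↦ (hindep k).integral_pow_mul_add_pow (hp k) (hsum k) hab

end ProbabilityTheory

section IID

variable {Ω ι : Type*} [MeasurableSpace Ω] {μ : Measure Ω} {Y : ι → Ω → ℝ} {Z : Ω → ℝ}

lemma integral_sum_of_integral_eq_zero (hident : ∀ i, IdentDistrib (Y i) Z μ μ)
    (hZ : Integrable Z μ) (hZ0 : ∫ ω, Z ω ∂μ = 0) (s : Finset ι) :
    ∫ ω, ∑ i ∈ s, Y i ω ∂μ = 0 := by
  rw [integral_finsetSum _ fun i _ ↦ (hident i).symm.integrable_snd hZ]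
  simp [(hident _).integral_eq, hZ0]

variable [IsProbabilityMeasure μ]

lemma integral_sum_pow_of_identDistrib (hident : ∀ i, IdentDistrib (Y i) Z μ μ) {p r : ℕ}
    (hZ : MemLp Z p μ) (hr : r ≤ p) (s : Finset ι) :
    ∫ ω, ∑ i ∈ s, Y i ω ^ r ∂μ = #s * ∫ ω, Z ω ^ r ∂μ := by
  rw [integral_finsetSum _ fun i _ ↦ ((hident i).symm.memLp_snd hZ).integrable_pow hr]
  simp [(hident _).integral_pow_eq]

lemma integral_sum_sq_of_integral_eq_zero (hY : iIndepFun Y μ)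
    (hident : ∀ i, IdentDistrib (Y i) Z μ μ) (hZ : MemLp Z 2 μ) (hZ0 : ∫ ω, Z ω ∂μ = 0)
    (s : Finset ι) :
    ∫ ω, (∑ i ∈ s, Y i ω) ^ 2 ∂μ = #s * ∫ ω, Z ω ^ 2 ∂μ := by
  have hYL2 i : MemLp (Y i) 2 μ := (hident i).symm.memLp_snd hZ
  have hmean : ∫ ω, (∑ i ∈ s, Y i) ω ∂μ = 0 := by
    simpa using integral_sum_of_integral_eq_zero hident (hZ.integrable one_le_two) hZ0 s
  have hvar := variance_of_integral_eq_zero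
    (Finset.aemeasurable_sum s fun i _ ↦ (hYL2 i).1.aemeasurable) hmean
  rw [IndepFun.variance_sum (fun i _ ↦ hYL2 i) fun i _ j _ hij ↦ hY.indepFun hij] at hvar
  simp only [Finset.sum_apply] at hvar
  rw [← hvar]
  simp [(hident _).variance_eq, variance_of_integral_eq_zero hZ.1.aemeasurable hZ0]

lemma integral_powerSum_one_pow_four [Fintype ι] [Nonempty ι] (hY : iIndepFun Y μ)
    (hident : ∀ i, IdentDistrib (Y i) Z μ μ) (hZ : MemLp Z 4 μ) (hZ0 : ∫ ω, Z ω ∂μ = 0) :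
    ∫ ω, powerSum (Y · ω) 1 ^ 4 ∂μ =
      Fintype.card ι * ∫ ω, Z ω ^ 4 ∂μ +
        3 * Fintype.card ι * (Fintype.card ι - 1) * (∫ ω, Z ω ^ 2 ∂μ) ^ 2 := by
  classical
  have h := hY.integral_powerSum_mul_powerSum_one_pow (p := 4) (a := 1) (b := 3)
    (fun i ↦ (hident i).symm.memLp_snd (by exact_mod_cast hZ)) le_rfl
  have hR1 k := integral_sum_of_integral_eq_zero hident (hZ.integrable (by norm_num)) hZ0
    (univ.erase k)
  have hR2 k := integral_sum_sq_of_integral_eq_zero hY hident (hZ.mono_exponent (by norm_num)) hZ0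
    (univ.erase k)
  simp only [sum_range_succ, sum_range_zero, Nat.reduceSub, Nat.reduceAdd, pow_zero, pow_one,
    (hident _).integral_pow_eq, hR1, hR2, hZ0, ← pow_succ'] at h
  rw [h]
  simp [card_erase_of_mem, Nat.cast_pred Fintype.card_pos]
  ring

lemma integral_powerSum_two_mul_powerSum_one_sq [Fintype ι] [Nonempty ι] (hY : iIndepFun Y μ)
    (hident : ∀ i, IdentDistrib (Y i) Z μ μ) (hZ : MemLp Z 4 μ) (hZ0 : ∫ ω, Z ω ∂μ = 0) :
    ∫ ω, powerSum (Y · ω) 2 * powerSum (Y · ω) 1 ^ 2 ∂μ =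
      Fintype.card ι * ∫ ω, Z ω ^ 4 ∂μ +
        Fintype.card ι * (Fintype.card ι - 1) * (∫ ω, Z ω ^ 2 ∂μ) ^ 2 := by
  classical
  have h := hY.integral_powerSum_mul_powerSum_one_pow (p := 4) (a := 2) (b := 2)
    (fun i ↦ (hident i).symm.memLp_snd (by exact_mod_cast hZ)) le_rfl
  have hR1 k := integral_sum_of_integral_eq_zero hident (hZ.integrable (by norm_num)) hZ0
    (univ.erase k)
  have hR2 k := integral_sum_sq_of_integral_eq_zero hY hident (hZ.mono_exponent (by norm_num)) hZ0
    (univ.erase k)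
  simp only [sum_range_succ, sum_range_zero, Nat.reduceSub, Nat.reduceAdd, pow_zero, pow_one,
    (hident _).integral_pow_eq, hR1, hR2] at h
  rw [h]
  simp [card_erase_of_mem, Nat.cast_pred Fintype.card_pos]
  ring

lemma integral_powerSum_two_sq [Fintype ι] [Nonempty ι] (hY : iIndepFun Y μ)
    (hident : ∀ i, IdentDistrib (Y i) Z μ μ) (hZ : MemLp Z 4 μ) :
    ∫ ω, powerSum (Y · ω) 2 ^ 2 ∂μ =
      Fintype.card ι * ∫ ω, Z ω ^ 4 ∂μ +
        Fintype.card ι * (Fintype.card ι - 1) * (∫ ω, Z ω ^ 2 ∂μ) ^ 2 := by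
  classical
  have h := (hY.comp (fun _ x ↦ x ^ 2) fun _ ↦ by fun_prop).integral_powerSum_mul_powerSum_one_pow
    (p := 2) (a := 1) (b := 1)
    (fun i ↦ ((hident i).symm.memLp_snd hZ).sq_of_four) le_rfl
  have hQ k := integral_sum_pow_of_identDistrib hident hZ (r := 2) (by norm_num) (univ.erase k)
  simp only [sum_range_succ, sum_range_zero, Nat.reduceSub, Nat.reduceAdd, pow_zero, pow_one,
    Function.comp_apply, ← pow_mul, (hident _).integral_pow_eq, hQ] at h
  simp only [powerSum, pow_one, ← sq] at h ⊢
  rw [h]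
  simp [card_erase_of_mem, Nat.cast_pred Fintype.card_pos]
  ring

lemma integral_powerSum_three_mul_powerSum_one [Fintype ι] (hY : iIndepFun Y μ)
    (hident : ∀ i, IdentDistrib (Y i) Z μ μ) (hZ : MemLp Z 4 μ) (hZ0 : ∫ ω, Z ω ∂μ = 0) :
    ∫ ω, powerSum (Y · ω) 3 * powerSum (Y · ω) 1 ∂μ = Fintype.card ι * ∫ ω, Z ω ^ 4 ∂μ := by
  classical
  have h := hY.integral_powerSum_mul_powerSum_one_pow (p := 4) (a := 3) (b := 1)
    (fun i ↦ (hident i).symm.memLp_snd (by exact_mod_cast hZ)) le_rfl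
  have hR1 k := integral_sum_of_integral_eq_zero hident (hZ.integrable (by norm_num)) hZ0
    (univ.erase k)
  simp only [sum_range_succ, sum_range_zero, Nat.reduceSub, Nat.reduceAdd, pow_zero, pow_one,
    (hident _).integral_pow_eq, hR1] at h
  rw [h]
  simp

theorem integral_hStat4_of_integral_eq_zero [Fintype ι] (hY : iIndepFun Y μ)
    (hident : ∀ i, IdentDistrib (Y i) Z μ μ) (hZ : MemLp Z 4 μ) (hZ0 : ∫ ω, Z ω ∂μ = 0)
    (hcard : 4 ≤ Fintype.card ι) :
    ∫ ω, hStat4 (Y · ω) ∂μ = ∫ ω, Z ω ^ 4 ∂μ := by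
  classical
  have : Nonempty ι := Fintype.card_pos_iff.1 (by omega)
  have hYL4 i : MemLp (Y i) (4 : ℕ) μ := (hident i).symm.memLp_snd (by exact_mod_cast hZ)
  have I1 : Integrable (fun ω ↦ powerSum (Y · ω) 1 ^ 4) μ := by
    simpa only [← pow_succ'] using
      hY.integrable_powerSum_mul_powerSum_one_pow hYL4 (a := 1) (b := 3) le_rfl
  have I2 := hY.integrable_powerSum_mul_powerSum_one_pow hYL4 (a := 2) (b := 2) le_rfl
  have I3 : Integrable (fun ω ↦ powerSum (Y · ω) 2 ^ 2) μ := by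
    simpa only [powerSum, pow_one, ← sq, Function.comp_apply] using
      (hY.comp (fun _ x ↦ x ^ 2) fun _ ↦ by fun_prop).integrable_powerSum_mul_powerSum_one_pow
        (p := 2) (a := 1) (b := 1) (fun i ↦ ((hident i).symm.memLp_snd hZ).sq_of_four) le_rfl
  have I4 : Integrable (fun ω ↦ powerSum (Y · ω) 3 * powerSum (Y · ω) 1) μ := by
    simpa only [pow_one] using
      hY.integrable_powerSum_mul_powerSum_one_pow hYL4 (a := 3) (b := 1) le_rfl
  have I5 : Integrable (fun ω ↦ powerSum (Y · ω) 4) μ := by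
    simpa only [pow_zero, mul_one] using
      hY.integrable_powerSum_mul_powerSum_one_pow hYL4 (a := 4) (b := 0) le_rfl
  have E5 : ∫ ω, powerSum (Y · ω) 4 ∂μ = Fintype.card ι * ∫ ω, Z ω ^ 4 ∂μ := by
    simpa [powerSum] using integral_sum_pow_of_identDistrib hident hZ (r := 4) (by norm_num) univ
  set n : ℝ := (Fintype.card ι : ℝ) with hn
  simp only [hStat4]
  rw [integral_const_mul, integral_add (by fun_prop) (by fun_prop),
    integral_add (by fun_prop) (by fun_prop), integral_add (by fun_prop) (by fun_prop),
    integral_add (by fun_prop) (by fun_prop), integral_const_mul, integral_const_mul,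
    integral_const_mul, integral_const_mul, integral_const_mul,
    integral_powerSum_one_pow_four hY hident hZ hZ0,
    integral_powerSum_two_mul_powerSum_one_sq hY hident hZ hZ0,
    integral_powerSum_two_sq hY hident hZ,
    integral_powerSum_three_mul_powerSum_one hY hident hZ hZ0, E5, ← hn]
  have hn4 : (4 : ℝ) ≤ n := by rw [hn]; exact_mod_cast hcard
  have hD : n * (n - 1) * (n - 2) * (n - 3) ≠ 0 := by
    have : (0 : ℝ) < n - 3 := by linarith
    have : (0 : ℝ) < n - 2 := by linarith
    have : (0 : ℝ) < n - 1 := by linarith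
    positivity
  rw [inv_mul_eq_iff_eq_mul₀ hD]
  ring

theorem integral_hStat4 [Fintype ι] {X : ι → Ω → ℝ} (hX : iIndepFun X μ)
    (hident : ∀ i, IdentDistrib (X i) Z μ μ) (hZ : MemLp Z 4 μ) (hcard : 4 ≤ Fintype.card ι) :
    ∫ ω, hStat4 (X · ω) ∂μ = ∫ ω, (Z ω - ∫ ω', Z ω' ∂μ) ^ 4 ∂μ := by
  set c := ∫ ω, Z ω ∂μ
  have hY : iIndepFun (fun i ω ↦ X i ω - c) μ := hX.comp (fun _ x ↦ x - c) fun _ ↦ by fun_prop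
  have hidentY i : IdentDistrib (fun ω ↦ X i ω - c) (fun ω ↦ Z ω - c) μ μ :=
    (hident i).comp (measurable_id.sub_const c)
  have hZc0 : ∫ ω, Z ω - c ∂μ = 0 := by
    rw [integral_sub (hZ.integrable (by norm_num)) (integrable_const c), integral_const]
    simp [c]
  rw [← integral_hStat4_of_integral_eq_zero hY hidentY (hZ.sub (memLp_const c)) hZc0 hcard]
  congr with ω
  rw [← hStat4_add_const (fun i ↦ X i ω - c) c]
  simp

end IID

/-- The fourth h-statistic is an unbiased estimator of the fourth central moment:
for `N ≥ 4` i.i.d. samples, `E[h₄] = μ₄`, where `h₄` is expressed via the power sums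
`S r = ∑ i, (X i)^r`. -/
theorem h4_unbiased {Ω : Type*} [MeasureSpace Ω]
    [IsProbabilityMeasure (ℙ : Measure Ω)]
    (N : ℕ) (hN : 4 ≤ N) (X : Fin N → Ω → ℝ)
    (hindep : iIndepFun X ℙ)
    (hident : ∀ i, IdentDistrib (X i) (X ⟨0, by omega⟩) ℙ ℙ)
    (hL4 : ∀ i, MemLp (X i) 4 ℙ)
    (S : ℕ → Ω → ℝ) (hS : ∀ r ω, S r ω = ∑ i, (X i ω) ^ r)
    (μ₄ : ℝ)
    (hμ₄ : μ₄ = ∫ ω, (X ⟨0, by omega⟩ ω - ∫ ω', X ⟨0, by omega⟩ ω' ∂ℙ) ^ 4 ∂ℙ) :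
    ∫ ω, ((N : ℝ) * ((N : ℝ) - 1) * ((N : ℝ) - 2) * ((N : ℝ) - 3))⁻¹ *
        (-3 * (S 1 ω) ^ 4 + 6 * N * (S 1 ω) ^ 2 * S 2 ω + (9 - 6 * (N : ℝ)) * (S 2 ω) ^ 2 +
          (-4 * (N : ℝ) ^ 2 + 8 * N - 12) * S 1 ω * S 3 ω +
          ((N : ℝ) ^ 3 - 2 * (N : ℝ) ^ 2 + 3 * N) * S 4 ω) ∂ℙ = μ₄ := by
  rw [hμ₄, ← integral_hStat4 hindep hident (hL4 _) (by simpa using hN)]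
  congr with ω
  simp only [hStat4, powerSum, hS, Fintype.card_fin]
  ring
end

section
/- Optimal MLMC sample allocation: minimizing the total cost ∑_{l=0}^L N_l C_l subject to the sampling-error constraint ∑_{l=0}^L V_l/N_l ≤ ε²/2 (treating N_l as positive reals) is achieved by N_l = τ·sqrt(V_l/C_l) with τ = (2/ε²)·∑_{l=0}^L sqrt(V_l C_l), and the resulting minimal cost is (2/ε²)(∑_{l=0}^L sqrt(V_l C_l))². -/
/-!
Writing `σ l = √(V l · C l)`, Cauchy–Schwarz gives, for every positive allocation `N`,
`(∑ σ l)² = (∑ √(V l / N l) · √(N l · C l))² ≤ (∑ V l / N l) · (∑ N l · C l)`,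
so the error constraint forces the cost `∑ N l · C l` to be at least `(2/ε²)(∑ σ l)²`.
The allocation `N l ∝ √(V l / C l)` makes both factors proportional termwise, hence attains
the bound, and the scale `τ` is chosen so that the constraint is active.
-/

open Finset Real

lemma Real.sqrt_div_mul_self_eq_sqrt_mul (v : ℝ) {c : ℝ} (hc : 0 ≤ c) :
    √(v / c) * c = √(v * c) := by
  rcases hc.eq_or_lt with rfl | hc
  · simp
  rw [← sqrt_sq hc.le, ← sqrt_mul' _ (sq_nonneg _), sqrt_sq hc.le]
  congr 1
  field_simp

lemma Real.div_sqrt_div_eq_sqrt_mul {v : ℝ} (hv : 0 ≤ v) (c : ℝ) :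
    v / √(v / c) = √(v * c) := by
  rcases hv.eq_or_lt with rfl | hv
  · simp
  rcases eq_or_ne c 0 with rfl | hc
  · simp
  rw [← sqrt_sq hv.le, ← sqrt_div (sq_nonneg _), sqrt_sq hv.le]
  congr 1
  field_simp

theorem Finset.sq_sum_sqrt_mul_le_sum_div_mul_sum_mul {ι : Type*} (s : Finset ι)
    {V C N : ι → ℝ} (hV : ∀ i ∈ s, 0 ≤ V i) (hC : ∀ i ∈ s, 0 ≤ C i) (hN : ∀ i ∈ s, 0 < N i) :
    (∑ i ∈ s, √(V i * C i)) ^ 2 ≤ (∑ i ∈ s, V i / N i) * ∑ i ∈ s, N i * C i :=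
  sum_sq_le_sum_mul_sum_of_sq_le_mul s
    (fun i hi => div_nonneg (hV i hi) (hN i hi).le)
    (fun i hi => mul_nonneg (hN i hi).le (hC i hi))
    fun i hi => le_of_eq <| by
      rw [sq_sqrt (mul_nonneg (hV i hi) (hC i hi))]
      field_simp [(hN i hi).ne']

/-- Optimal MLMC sample allocation: with `N l = τ·√(V l / C l)` and
`τ = (2/ε²)·∑ l, √(V l · C l)`, the sampling-error constraint `∑ l, V l / N l ≤ ε²/2`
holds, any other positive allocation satisfying the constraint has at least the same
total cost, and the minimal cost equals `(2/ε²)(∑ l, √(V l · C l))²`. -/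
theorem mlmc_optimal_allocation (L : ℕ) (V C : Fin (L + 1) → ℝ)
    (hV : ∀ l, 0 < V l) (hC : ∀ l, 0 < C l) (ε : ℝ) (hε : 0 < ε)
    (τ : ℝ) (hτ : τ = (2 / ε ^ 2) * ∑ l, Real.sqrt (V l * C l))
    (Nopt : Fin (L + 1) → ℝ) (hNopt : ∀ l, Nopt l = τ * Real.sqrt (V l / C l)) :
    (∑ l, V l / Nopt l ≤ ε ^ 2 / 2) ∧
    (∀ N : Fin (L + 1) → ℝ, (∀ l, 0 < N l) → ∑ l, V l / N l ≤ ε ^ 2 / 2 →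
      ∑ l, Nopt l * C l ≤ ∑ l, N l * C l) ∧
    ∑ l, Nopt l * C l = (2 / ε ^ 2) * (∑ l, Real.sqrt (V l * C l)) ^ 2 := by
  set S := ∑ l, √(V l * C l)
  have hS : 0 < S := sum_pos (fun l _ => sqrt_pos.2 (mul_pos (hV l) (hC l))) univ_nonempty
  have hcost : ∑ l, Nopt l * C l = (2 / ε ^ 2) * S ^ 2 := by
    simp_rw [hNopt, mul_assoc, sqrt_div_mul_self_eq_sqrt_mul _ (hC _).le, ← mul_sum, hτ]
    ring
  refine ⟨?_, fun N hN hNε => ?_, hcost⟩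
  · refine le_of_eq ?_
    calc ∑ l, V l / Nopt l = S / τ := by
          simp_rw [hNopt, div_mul_eq_div_div_swap, div_sqrt_div_eq_sqrt_mul (hV _).le, ← sum_div]
          rfl
      _ = ε ^ 2 / 2 := by rw [hτ]; field_simp
  · have hCS := sq_sum_sqrt_mul_le_sum_div_mul_sum_mul univ (fun l _ => (hV l).le)
      (fun l _ => (hC l).le) fun l _ => hN l
    have hNC : 0 ≤ ∑ l, N l * C l := sum_nonneg fun l _ => (mul_pos (hN l) (hC l)).le
    calc ∑ l, Nopt l * C l = (2 / ε ^ 2) * S ^ 2 := hcost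
      _ ≤ (2 / ε ^ 2) * ((ε ^ 2 / 2) * ∑ l, N l * C l) := by gcongr; exact hCS.trans (by gcongr)
      _ = ∑ l, N l * C l := by field_simp
end

section
/- MLMC cost bound in the regime β > γ: assume h_l = h_0·2^{−l}, V_l ≤ c_2 h_l^β, C_l ≤ c_3 h_l^{−γ} with β > γ > 0, and use the optimal allocation for sampling tolerance ε²/2. Then there exists a constant c_4 (independent of ε and L) such that the total cost ∑_l N_l C_l ≤ c_4 ε^{−2}. -/
/-!
With `δ = (β - γ)/2`, the level bounds give `√(V l C l) ≤ √(c₂ c₃) h₀^δ (2^(-δ))^l`, so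
`∑ √(V l C l)` is dominated by a convergent geometric series, uniformly in `L`. The optimal
allocation makes the total cost exactly `(2/ε²) (∑ √(V l C l))²`, which is therefore
`O(ε⁻²)`.
-/

open Finset

lemma Real.sqrt_div_mul_self_of_pos {v c : ℝ} (hc : 0 < c) : √(v / c) * c = √(v * c) := by
  rw [← Real.sqrt_sq hc.le, ← Real.sqrt_mul' _ (sq_nonneg c), Real.sqrt_sq hc.le]
  congr 1
  field_simp

lemma sum_optimal_allocation_mul_cost {ι : Type*} [Fintype ι] (a : ℝ) (V C : ι → ℝ)
    (hC : ∀ i, 0 < C i) :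
    ∑ i, a * (∑ k, √(V k * C k)) * √(V i / C i) * C i = a * (∑ k, √(V k * C k)) ^ 2 := by
  simp_rw [mul_assoc _ √(_ / _), Real.sqrt_div_mul_self_of_pos (hC _), ← mul_sum]
  ring

lemma sqrt_mul_le_of_le_rpow {v c h c₂ c₃ β γ : ℝ} (hh : 0 < h) (hc₂ : 0 ≤ c₂) (hc : 0 ≤ c)
    (hv : v ≤ c₂ * h ^ β) (hc' : c ≤ c₃ * h ^ (-γ)) :
    √(v * c) ≤ √(c₂ * c₃) * h ^ ((β - γ) / 2) := by
  have hvc : v * c ≤ c₂ * c₃ * h ^ (β - γ) := by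
    calc v * c ≤ c₂ * h ^ β * (c₃ * h ^ (-γ)) :=
          mul_le_mul hv hc' hc (by positivity)
      _ = c₂ * c₃ * h ^ (β - γ) := by
          rw [sub_eq_add_neg, Real.rpow_add hh]; ring
  calc √(v * c) ≤ √(c₂ * c₃ * h ^ (β - γ)) := Real.sqrt_le_sqrt hvc
    _ = √(c₂ * c₃) * h ^ ((β - γ) / 2) := by
      rw [Real.sqrt_mul' _ (by positivity)]
      congr 1
      rw [Real.sqrt_eq_rpow, ← Real.rpow_mul hh.le]
      ring_nf

lemma rpow_geometric_mesh {h₀ : ℝ} (hh₀ : 0 ≤ h₀) (δ : ℝ) (l : ℕ) :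
    (h₀ * 2 ^ (-(l : ℝ))) ^ δ = h₀ ^ δ * ((2 : ℝ) ^ (-δ)) ^ l := by
  rw [Real.mul_rpow hh₀ (by positivity), ← Real.rpow_natCast, ← Real.rpow_mul zero_le_two,
    ← Real.rpow_mul zero_le_two]
  ring_nf

lemma sum_fin_geometric_le {r : ℝ} (hr₀ : 0 ≤ r) (hr₁ : r < 1) (n : ℕ) :
    ∑ k : Fin n, r ^ (k : ℕ) ≤ (1 - r)⁻¹ := by
  rw [Fin.sum_univ_eq_sum_range (r ^ ·), range_eq_Ico]
  simpa using geom_sum_Ico_le_of_lt_one hr₀ hr₁ (m := 0) (n := n)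

lemma two_rpow_neg_half_sub_lt_one {β γ : ℝ} (hβγ : γ < β) : (2 : ℝ) ^ (-((β - γ) / 2)) < 1 :=
  Real.rpow_lt_one_of_one_lt_of_neg one_lt_two (neg_neg_of_pos (half_pos (sub_pos.2 hβγ)))

lemma sum_sqrt_mul_le_of_geometric_mesh {h₀ c₂ c₃ β γ : ℝ} (hh₀ : 0 < h₀) (hc₂ : 0 ≤ c₂)
    (hβγ : γ < β) {n : ℕ} {V C : Fin n → ℝ} (hC : ∀ l, 0 ≤ C l)
    (hVb : ∀ l, V l ≤ c₂ * (h₀ * 2 ^ (-(l : ℝ))) ^ β)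
    (hCb : ∀ l, C l ≤ c₃ * (h₀ * 2 ^ (-(l : ℝ))) ^ (-γ)) :
    ∑ l, √(V l * C l) ≤
      √(c₂ * c₃) * h₀ ^ ((β - γ) / 2) * (1 - (2 : ℝ) ^ (-((β - γ) / 2)))⁻¹ := by
  set K := √(c₂ * c₃) * h₀ ^ ((β - γ) / 2)
  set r : ℝ := 2 ^ (-((β - γ) / 2))
  have hr₁ : r < 1 := two_rpow_neg_half_sub_lt_one hβγ
  calc ∑ l, √(V l * C l) ≤ ∑ l : Fin n, K * r ^ (l : ℕ) := by
        refine sum_le_sum fun l _ => ?_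
        have hlevel := sqrt_mul_le_of_le_rpow (by positivity) hc₂ (hC l) (hVb l) (hCb l)
        rwa [rpow_geometric_mesh hh₀.le, ← mul_assoc] at hlevel
    _ ≤ K * (1 - r)⁻¹ := by
        rw [← mul_sum]
        exact mul_le_mul_of_nonneg_left (sum_fin_geometric_le (by positivity) hr₁ _)
          (by positivity)

theorem mlmc_cost_bound_beta_gt_gamma_general (h₀ c₂ c₃ β γ : ℝ)
    (hh₀ : 0 < h₀) (hc₂ : 0 < c₂) (hc₃ : 0 < c₃)
    (hβγ : γ < β) :
    ∃ c₄ : ℝ, 0 < c₄ ∧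
      ∀ (L : ℕ) (ε : ℝ), 0 < ε →
        ∀ V C : Fin (L + 1) → ℝ,
          (∀ l, 0 < V l) → (∀ l, 0 < C l) →
          (∀ l, V l ≤ c₂ * (h₀ * 2 ^ (-(l : ℝ))) ^ β) →
          (∀ l, C l ≤ c₃ * (h₀ * 2 ^ (-(l : ℝ))) ^ (-γ)) →
          ∀ N : Fin (L + 1) → ℝ,
            (∀ l, N l = (2 / ε ^ 2) * (∑ k, Real.sqrt (V k * C k)) * Real.sqrt (V l / C l)) →
            ∑ l, N l * C l ≤ c₄ * ε ^ (-2 : ℝ) := by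
  set M := √(c₂ * c₃) * h₀ ^ ((β - γ) / 2) * (1 - (2 : ℝ) ^ (-((β - γ) / 2)))⁻¹
  have hM : 0 < M :=
    mul_pos (by positivity) (inv_pos.2 (sub_pos.2 (two_rpow_neg_half_sub_lt_one hβγ)))
  refine ⟨2 * M ^ 2, mul_pos two_pos (pow_pos hM 2), fun L ε _ V C _ hC hVb hCb N hN => ?_⟩
  have hsum : ∑ k, √(V k * C k) ≤ M :=
    sum_sqrt_mul_le_of_geometric_mesh hh₀ hc₂.le hβγ (fun l => (hC l).le) hVb hCb
  have hsq : (∑ k, √(V k * C k)) ^ 2 ≤ M ^ 2 :=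
    pow_le_pow_left₀ (sum_nonneg fun _ _ => Real.sqrt_nonneg _) hsum 2
  simp_rw [hN]
  rw [sum_optimal_allocation_mul_cost _ _ _ hC, Real.rpow_neg_ofNat, zpow_neg, zpow_ofNat]
  calc 2 / ε ^ 2 * (∑ k, √(V k * C k)) ^ 2 ≤ 2 / ε ^ 2 * M ^ 2 := by gcongr
    _ = 2 * M ^ 2 * (ε ^ 2)⁻¹ := by ring

/-- MLMC cost bound in the regime `β > γ`: for a geometric mesh hierarchy
`h l = h₀·2^(−l)` with level variances `V l ≤ c₂ (h l)^β` and costs `C l ≤ c₃ (h l)^(−γ)`,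
`β > γ > 0`, the optimal allocation `N l = (2/ε²)(∑ k, √(V k · C k))·√(V l / C l)` for
sampling tolerance `ε²/2` yields a total cost bounded by `c₄ ε⁻²` with `c₄` independent
of `ε` and `L`. -/
theorem mlmc_cost_bound_beta_gt_gamma (h₀ c₂ c₃ β γ : ℝ)
    (hh₀ : 0 < h₀) (hc₂ : 0 < c₂) (hc₃ : 0 < c₃)
    (hγ : 0 < γ) (hβγ : γ < β) :
    ∃ c₄ : ℝ, 0 < c₄ ∧
      ∀ (L : ℕ) (ε : ℝ), 0 < ε →
        ∀ V C : Fin (L + 1) → ℝ,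
          (∀ l, 0 < V l) → (∀ l, 0 < C l) →
          (∀ l, V l ≤ c₂ * (h₀ * 2 ^ (-(l : ℝ))) ^ β) →
          (∀ l, C l ≤ c₃ * (h₀ * 2 ^ (-(l : ℝ))) ^ (-γ)) →
          ∀ N : Fin (L + 1) → ℝ,
            (∀ l, N l = (2 / ε ^ 2) * (∑ k, Real.sqrt (V k * C k)) * Real.sqrt (V l / C l)) →
            ∑ l, N l * C l ≤ c₄ * ε ^ (-2 : ℝ) :=
  mlmc_cost_bound_beta_gt_gamma_general h₀ c₂ c₃ β γ hh₀ hc₂ hc₃ hβγ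
end
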